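/- arXiv:1410.4477 — 2 statements merged into one kernel-verified Lean document; each statement's English description precedes it below -/
import Mathlib

section
/- Let w̃ₖ₋₁, w̃ₖ ∈ ℂ²ᴸ, U a 2L×T complex matrix, Σ a 2L×2L Hermitian positive definite matrix, and F = UᴴΣU assumed invertible. Define e_a = UᴴΣ w̃ₖ₋₁ and e_p = UᴴΣ w̃ₖ. If w̃ₖ = w̃ₖ₋₁ − U F⁻¹(e_a − e_p), then the weighted energy conservation relation holds: ‖w̃ₖ‖²_Σ + e_aᴴ F⁻¹ e_a = ‖w̃ₖ₋₁‖²_Σ + e_pᴴ F⁻¹ e_p, where ‖u‖²_Σ = uᴴ Σ u. -/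
open scoped ComplexOrder
open Matrix

/-- Weighted energy conservation relation:
‖w̃ₖ‖²_Σ + e_aᴴ F⁻¹ e_a = ‖w̃ₖ₋₁‖²_Σ + e_pᴴ F⁻¹ e_p. -/
theorem weighted_energy_conservation
    (L T : ℕ) (U : Matrix (Fin (2 * L)) (Fin T) ℂ)
    (S : Matrix (Fin (2 * L)) (Fin (2 * L)) ℂ) (hS : S.PosDef)
    (wprev wcur : Fin (2 * L) → ℂ)
    (hF : IsUnit (U.conjTranspose * S * U))
    (hupd : wcur = wprev -
      U.mulVec ((U.conjTranspose * S * U)⁻¹.mulVec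
        ((U.conjTranspose * S).mulVec wprev - (U.conjTranspose * S).mulVec wcur))) :
    star wcur ⬝ᵥ S.mulVec wcur
      + star ((U.conjTranspose * S).mulVec wprev) ⬝ᵥ
          (U.conjTranspose * S * U)⁻¹.mulVec ((U.conjTranspose * S).mulVec wprev)
    = star wprev ⬝ᵥ S.mulVec wprev
      + star ((U.conjTranspose * S).mulVec wcur) ⬝ᵥ
          (U.conjTranspose * S * U)⁻¹.mulVec ((U.conjTranspose * S).mulVec wcur) := by
  classical
  set F := U.conjTranspose * S * U with hFdef
  set ea := (U.conjTranspose * S).mulVec wprev with hea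
  set ep := (U.conjTranspose * S).mulVec wcur with hep
  set d := F⁻¹.mulVec (ea - ep) with hd
  have hSH : Sᴴ = S := hS.isHermitian.eq
  have hFH : Fᴴ = F := by
    rw [hFdef, conjTranspose_mul, conjTranspose_mul, hSH, conjTranspose_conjTranspose,
      Matrix.mul_assoc]
  have hdet : IsUnit F.det := (Matrix.isUnit_iff_isUnit_det F).mp hF
  have hFinv : F * F⁻¹ = 1 := Matrix.mul_nonsing_inv F hdet
  have hinvF : F⁻¹ * F = 1 := Matrix.nonsing_inv_mul F hdet
  have h1 : wcur = wprev - U.mulVec d := hupd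
  have h5 : ep = ea - F.mulVec d := by
    rw [hep, h1, Matrix.mulVec_sub, ← hea, Matrix.mulVec_mulVec, ← hFdef]
  clear_value d
  -- generic helper
  have key : ∀ {m n : Type} [Fintype m] [Fintype n] (M : Matrix (Fin (2*L)) m ℂ)
      (N : Matrix (Fin (2*L)) n ℂ) (x : m → ℂ) (y : n → ℂ),
      star (M.mulVec x) ⬝ᵥ N.mulVec y = star x ⬝ᵥ (Mᴴ * N).mulVec y := by
    intro m n _ _ M N x y
    rw [star_mulVec, ← Matrix.dotProduct_mulVec, Matrix.mulVec_mulVec]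
  have key2 : ∀ {m n : Type} [Fintype m] [Fintype n] (M : Matrix (Fin T) m ℂ)
      (N : Matrix (Fin T) n ℂ) (x : m → ℂ) (y : n → ℂ),
      star (M.mulVec x) ⬝ᵥ N.mulVec y = star x ⬝ᵥ (Mᴴ * N).mulVec y := by
    intro m n _ _ M N x y
    rw [star_mulVec, ← Matrix.dotProduct_mulVec, Matrix.mulVec_mulVec]
  have c1 : star (U.mulVec d) ⬝ᵥ S.mulVec wprev = star d ⬝ᵥ ea := by
    rw [key, ← hea]
  have c2 : star ea ⬝ᵥ d = star wprev ⬝ᵥ S.mulVec (U.mulVec d) := by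
    rw [hea, star_mulVec, ← Matrix.dotProduct_mulVec, conjTranspose_mul, hSH,
      conjTranspose_conjTranspose, ← Matrix.mulVec_mulVec]
  have q : star (U.mulVec d) ⬝ᵥ S.mulVec (U.mulVec d) = star d ⬝ᵥ F.mulVec d := by
    rw [key, Matrix.mulVec_mulVec, ← hFdef]
  have t1 : star (F.mulVec d) ⬝ᵥ F⁻¹.mulVec ea = star d ⬝ᵥ ea := by
    rw [key2, hFH, hFinv, Matrix.one_mulVec]
  have t2 : star ea ⬝ᵥ F⁻¹.mulVec (F.mulVec d) = star ea ⬝ᵥ d := by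
    rw [Matrix.mulVec_mulVec, hinvF]
    simp
  have t3 : star (F.mulVec d) ⬝ᵥ F⁻¹.mulVec (F.mulVec d) = star d ⬝ᵥ F.mulVec d := by
    rw [key2, hFH, hFinv, Matrix.one_mulVec]
  rw [h1, h5]
  simp only [star_sub, Matrix.mulVec_sub, sub_dotProduct, dotProduct_sub]
  rw [c1, ← c2, q, t1, t2, t3]
  ring
end

section
/- Let M and N be Hermitian positive definite n×n complex matrices and μ > 0 a real number. If μ < 1/λ_max(M⁻¹N) (largest eigenvalue of M⁻¹N, which is real and positive), then the matrix μM − μ²N is positive definite; consequently I − μM + μ²N has all eigenvalues strictly less than 1. -/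
/-!
With `S = √M`, the matrix `M⁻¹N = S⁻¹(S⁻¹N)` has the same characteristic polynomial as the
Hermitian matrix `S⁻¹NS⁻¹`, so `λ = λ_max(M⁻¹N)` gives `S⁻¹NS⁻¹ ≤ λ` in the Loewner order, and
conjugating by `S` gives `N ≤ λM`. Then `μM - μ²N = μ(1 - μλ)M + μ²(λM - N)` is positive definite,
and the eigenvalues of `I - (μM - μ²N)` are `1` minus its positive eigenvalues.
-/

open scoped ComplexOrder
open Matrix

namespace Matrix

section Order

variable {n : Type*} {𝕜 : Type*} [RCLike 𝕜]

open scoped MatrixOrder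

theorem PosDef.sub_smul_of_le_smul {M N : Matrix n n 𝕜} (hM : M.PosDef) {c t : ℝ}
    (hNM : N ≤ c • M) (ht : 0 ≤ t) (htc : t * c < 1) : (M - t • N).PosDef := by
  have hsplit : M - t • N = (1 - t * c) • M + t • (c • M - N) := by
    rw [smul_sub, smul_smul, sub_smul, one_smul]; abel
  rw [hsplit]
  exact (hM.smul (sub_pos.2 htc)).add_posSemidef ((le_iff.1 hNM).smul ht)

end Order

variable {n : Type*} [Fintype n] [DecidableEq n]

theorem spectrum_mul_comm {K : Type*} [Field K] (A B : Matrix n n K) :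
    spectrum K (A * B) = spectrum K (B * A) := by
  ext z
  rw [mem_spectrum_iff_isRoot_charpoly, mem_spectrum_iff_isRoot_charpoly, charpoly_mul_comm]

variable {𝕜 : Type*} [RCLike 𝕜]

open scoped MatrixOrder in
theorem PosDef.le_smul_of_re_spectrum_inv_mul_le {M N : Matrix n n 𝕜} (hM : M.PosDef)
    (hN : N.IsHermitian) {c : ℝ} (h : ∀ z ∈ spectrum 𝕜 (M⁻¹ * N), RCLike.re z ≤ c) :
    N ≤ c • M := by
  set S := CFC.sqrt M
  have hS : S.IsHermitian := (CFC.sqrt_nonneg M).posSemidef.isHermitian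
  have hSS : S * S = M := CFC.sqrt_mul_sqrt_self M hM.posSemidef.nonneg
  have hSdet : IsUnit S.det :=
    (isUnit_iff_isUnit_det S).1 <| (CFC.isUnit_sqrt_iff M hM.posSemidef.nonneg).2 hM.isUnit
  have hB : IsSelfAdjoint (S⁻¹ * N * S⁻¹) := by
    simpa [hS.inv.isSelfAdjoint.star_eq] using hN.isSelfAdjoint.conjugate S⁻¹
  have hspec : spectrum 𝕜 (M⁻¹ * N) = spectrum 𝕜 (S⁻¹ * N * S⁻¹) := by
    rw [← hSS, mul_inv_rev, mul_assoc, spectrum_mul_comm]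
  have hBc : (S⁻¹ * N * S⁻¹) ≤ algebraMap ℝ _ c := by
    refine le_algebraMap_of_spectrum_le fun x hx => ?_
    have := h (algebraMap ℝ 𝕜 x) (hspec ▸ (spectrum.algebraMap_mem_iff 𝕜).2 hx)
    rwa [RCLike.algebraMap_eq_ofReal, RCLike.ofReal_re] at this
  have hSBS : S * (S⁻¹ * N * S⁻¹) * S = N := by
    rw [mul_assoc S⁻¹ N, mul_nonsing_inv_cancel_left _ _ hSdet,
      nonsing_inv_mul_cancel_right _ _ hSdet]
  calc N = S * (S⁻¹ * N * S⁻¹) * S := hSBS.symm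
    _ ≤ S * algebraMap ℝ _ c * S := hS.isSelfAdjoint.conjugate_le_conjugate hBc
    _ = c • M := by
        rw [Algebra.algebraMap_eq_smul_one, mul_smul_comm, mul_one, smul_mul_assoc, hSS]

theorem PosDef.re_lt_one_of_mem_spectrum_one_sub {A : Matrix n n 𝕜} (hA : A.PosDef) {z : 𝕜}
    (hz : z ∈ spectrum 𝕜 (1 - A)) : RCLike.re z < 1 := by
  rw [← map_one (algebraMap 𝕜 (Matrix n n 𝕜)), ← spectrum.singleton_sub_eq] at hz
  obtain ⟨_, rfl, w, hw, rfl⟩ := hz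
  rw [hA.isHermitian.spectrum_eq_image_range] at hw
  obtain ⟨_, ⟨i, rfl⟩, rfl⟩ := hw
  simpa using hA.eigenvalues_pos i

end Matrix

/-- If M, N are Hermitian positive definite and 0 < μ < 1/λ_max(M⁻¹N), then
μM − μ²N is positive definite and consequently all eigenvalues of
I − μM + μ²N are strictly less than 1. -/
theorem step_size_stability
    (n : ℕ) (M N : Matrix (Fin n) (Fin n) ℂ)
    (hM : M.PosDef) (hN : N.PosDef) (μ : ℝ) (hμ0 : 0 < μ)
    (hμ : μ < 1 / sSup (Complex.re '' spectrum ℂ (M⁻¹ * N))) :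
    ((μ : ℂ) • M - ((μ : ℂ)) ^ 2 • N).PosDef ∧
    ∀ z ∈ spectrum ℂ
        ((1 : Matrix (Fin n) (Fin n) ℂ) - (μ : ℂ) • M + ((μ : ℂ)) ^ 2 • N),
      z.re < 1 := by
  set c := sSup (Complex.re '' spectrum ℂ (M⁻¹ * N))
  have hc : 0 < c := one_div_pos.1 (hμ0.trans hμ)
  have hμc : μ * c < 1 := (lt_div_iff₀ hc).1 hμ
  open scoped MatrixOrder in
  have hNM : N ≤ c • M := hM.le_smul_of_re_spectrum_inv_mul_le hN.isHermitian fun z hz =>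
    le_csSup ((M⁻¹ * N).finite_spectrum.image _).bddAbove ⟨z, hz, rfl⟩
  have hA : ((μ : ℂ) • M - ((μ : ℂ)) ^ 2 • N).PosDef := by
    have hsmul : (μ : ℂ) • M - (μ : ℂ) ^ 2 • N = μ • (M - μ • N) := by
      rw [← Complex.ofReal_pow, Complex.coe_smul, Complex.coe_smul, smul_sub, smul_smul, sq]
    rw [hsmul]
    exact (hM.sub_smul_of_le_smul hNM hμ0.le hμc).smul hμ0
  refine ⟨hA, fun z hz => hA.re_lt_one_of_mem_spectrum_one_sub ?_⟩
  rwa [sub_add] at hz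
end
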